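/- arXiv:cs/0405085 — 8 statements merged into one kernel-verified Lean document; each statement's English description precedes it below -/
import Mathlib

section
/- Let f be a first-order monotone boolean function of arity k and let A ⊆ B ⊆ {1,…,n} with |B \ A| = 1. Then f is invariant under P^n_{A,B} if and only if f is invariant under P^n_{A,B'} for every B' with B ⊆ B' ⊆ {1,…,n}. -/
/-- The flat boolean domain: `⊥`, `tt`, `ff`. -/
abbrev Bb : Type := WithBot Bool

/-- The flat (domain) order on `Bb`: `⊥` below everything, `tt` and `ff` incomparable. -/
def bLE (a b : Bb) : Prop := a = ⊥ ∨ a = b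

/-- Pointwise flat order on tuples. -/
def tupLE {k : ℕ} (x y : Fin k → Bb) : Prop := ∀ i, bLE (x i) (y i)

/-- Strict pointwise flat order on tuples. -/
def tupLT {k : ℕ} (x y : Fin k → Bb) : Prop := tupLE x y ∧ x ≠ y

/-- A first-order boolean function is monotone for the flat order. -/
def FlatMono {k : ℕ} (f : (Fin k → Bb) → Bb) : Prop :=
  ∀ x y, tupLE x y → bLE (f x) (f y)

/-- The presequentiality relation `P^n_{A,B}` (indices `0,…,n-1`). -/
def Preseq (n : ℕ) (A B : Finset ℕ) : Set (Fin n → Bb) :=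
  {d | (∃ i : Fin n, (i : ℕ) ∈ A ∧ d i = ⊥) ∨
       (∀ i j : Fin n, (i : ℕ) ∈ B → (j : ℕ) ∈ B → d i = d j)}

/-- `P^n_{m,m'}`: the presequentiality relation on initial segments. -/
def PreseqSeg (n m m' : ℕ) : Set (Fin n → Bb) :=
  Preseq n (Finset.range m) (Finset.range m')

/-- `f` (arity `k`) is invariant under an `n`-ary relation `R`. -/
def Invariant {k n : ℕ} (f : (Fin k → Bb) → Bb) (R : Set (Fin n → Bb)) : Prop :=
  ∀ x : Fin k → Fin n → Bb, (∀ m, x m ∈ R) →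
    (fun i => f (fun m => x m i)) ∈ R

/-- `π₁(tr f)`: the set of minimal points where `f` is defined. -/
def traceDom {k : ℕ} (f : (Fin k → Bb) → Bb) : Set (Fin k → Bb) :=
  {v | f v ≠ ⊥ ∧ ∀ v', tupLT v' v → f v' = ⊥}

/-- Linear coherence of a set of tuples. -/
def LinCoherent {k : ℕ} (S : Set (Fin k → Bb)) : Prop :=
  ∀ j : Fin k, (∀ v ∈ S, v j ≠ ⊥) → ∀ v ∈ S, ∀ w ∈ S, v j = w j

/-- The coefficient of coherence `cc(f) ∈ ℕ∞`. -/
noncomputable def cc {k : ℕ} (f : (Fin k → Bb) → Bb) : ℕ∞ :=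
  sInf {c : ℕ∞ | ∃ S : Finset (Fin k → Bb),
    ↑S ⊆ traceDom f ∧ 2 ≤ S.card ∧ LinCoherent (↑S : Set (Fin k → Bb)) ∧ c = (S.card : ℕ∞)}

/-- The bivalued coefficient of coherence `bcc(f) ∈ ℕ∞`. -/
noncomputable def bcc {k : ℕ} (f : (Fin k → Bb) → Bb) : ℕ∞ :=
  sInf {c : ℕ∞ | ∃ S : Finset (Fin k → Bb),
    ↑S ⊆ traceDom f ∧ 3 ≤ S.card ∧ LinCoherent (↑S : Set (Fin k → Bb)) ∧
    (∃ v ∈ S, f v = ((true : Bool) : Bb)) ∧ (∃ v ∈ S, f v = ((false : Bool) : Bb)) ∧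
    c = (S.card : ℕ∞)}

/-- M-sequentiality, by induction on the arity. -/
def MSeq : ∀ {k : ℕ}, ((Fin k → Bb) → Bb) → Prop
  | 0, f => ∃ b, ∀ x, f x = b
  | (k+1), f => (∃ b, ∀ x, f x = b) ∨
      ∃ i : Fin (k+1), (∀ x, x i = ⊥ → f x = ⊥) ∧
        ∀ c : Bool, MSeq (fun x : Fin k → Bb => f (i.insertNth (c : Bb) x))

/-!
Let `b ∈ B \ A`. For `c ∈ B'`, the substitution of index `c` for index `b` fixes `A` and maps `B`
into `B'`, so precomposing with it sends `P_{A,B'}` into `P_{A,B}`, and invariance under `P_{A,B}`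
pulls back along it. Hence if the output `y` of `f` is defined on `A`, it satisfies `y c = y a`
for a fixed `a ∈ A` and every `c ∈ B'`, i.e. `y ∈ P_{A,B'}`. When `A = ∅`, `P_{A,B'}` only asks
for equal coordinates on `B'`, which every function preserves.
-/

theorem Invariant.preimage_comp {k n n' : ℕ} {f : (Fin k → Bb) → Bb} {R : Set (Fin n → Bb)}
    (hf : Invariant f R) (e : Fin n → Fin n') : Invariant f ((· ∘ e) ⁻¹' R) :=
  fun x hx => hf (fun m => x m ∘ e) hx

theorem invariant_preseq_empty {k n : ℕ} (f : (Fin k → Bb) → Bb) (B : Finset ℕ) :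
    Invariant f (Preseq n ∅ B) := by
  intro x hx
  refine Or.inr fun i j hi hj => congrArg f (funext fun m => ?_)
  rcases hx m with ⟨_, hA, _⟩ | hconst
  · exact absurd hA (Finset.notMem_empty _)
  · exact hconst i j hi hj

theorem comp_mem_preseq {n : ℕ} {A B B' : Finset ℕ} {e : Fin n → Fin n}
    (hfix : ∀ i : Fin n, (i : ℕ) ∈ A → e i = i)
    (hmaps : ∀ i : Fin n, (i : ℕ) ∈ B → (e i : ℕ) ∈ B')
    {d : Fin n → Bb} (hd : d ∈ Preseq n A B') : d ∘ e ∈ Preseq n A B := by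
  rcases hd with ⟨i, hiA, hi⟩ | hconst
  · exact Or.inl ⟨i, hiA, by simpa [hfix i hiA] using hi⟩
  · exact Or.inr fun i j hi hj => hconst _ _ (hmaps i hi) (hmaps j hj)

theorem update_id_apply_of_mem_of_notMem {n : ℕ} {A : Finset ℕ} {b c i : Fin n}
    (hbA : (b : ℕ) ∉ A) (hi : (i : ℕ) ∈ A) : Function.update id b c i = i :=
  Function.update_of_ne (by rintro rfl; exact hbA hi) _ _

theorem comp_update_mem_preseq {n : ℕ} {A B B' : Finset ℕ} (hBB' : B ⊆ B') {b c : Fin n}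
    (hbA : (b : ℕ) ∉ A) (hc : (c : ℕ) ∈ B') {d : Fin n → Bb} (hd : d ∈ Preseq n A B') :
    d ∘ Function.update id b c ∈ Preseq n A B := by
  refine comp_mem_preseq (fun i hi => update_id_apply_of_mem_of_notMem hbA hi) (fun i hi => ?_) hd
  by_cases hib : i = b
  · simpa [hib] using hc
  · simpa [Function.update_of_ne hib] using hBB' hi

theorem mem_preseq_of_comp_update_mem {n : ℕ} {A B B' : Finset ℕ} {a b : Fin n}
    (haA : (a : ℕ) ∈ A) (haB : (a : ℕ) ∈ B) (hbB : (b : ℕ) ∈ B) (hbA : (b : ℕ) ∉ A)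
    {d : Fin n → Bb} (hd : ∀ c : Fin n, (c : ℕ) ∈ B' → d ∘ Function.update id b c ∈ Preseq n A B) :
    d ∈ Preseq n A B' := by
  by_cases hbot : ∃ i : Fin n, (i : ℕ) ∈ A ∧ d i = ⊥
  · exact Or.inl hbot
  push Not at hbot
  have heq_a : ∀ c : Fin n, (c : ℕ) ∈ B' → d c = d a := by
    intro c hc
    rcases hd c hc with ⟨i, hiA, hi⟩ | hconst
    · simp only [Function.comp_apply, update_id_apply_of_mem_of_notMem hbA hiA] at hi
      exact absurd hi (hbot i hiA)
    · simpa [update_id_apply_of_mem_of_notMem hbA haA] using hconst b a hbB haB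
  exact Or.inr fun i j hi hj => (heq_a i hi).trans (heq_a j hj).symm

theorem stmt_3_general {k n : ℕ} (f : (Fin k → Bb) → Bb)
    (A B : Finset ℕ) (hAB : A ⊆ B) (hBn : ∀ i ∈ B, i < n)
    (hBA : (B \ A).card = 1) :
    Invariant f (Preseq n A B) ↔
      ∀ B' : Finset ℕ, B ⊆ B' → (∀ i ∈ B', i < n) → Invariant f (Preseq n A B') := by
  refine ⟨fun hinv B' hBB' _ => ?_, fun h => h B subset_rfl hBn⟩
  rcases A.eq_empty_or_nonempty with rfl | ⟨a, haA⟩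
  · exact invariant_preseq_empty f B'
  obtain ⟨b, hb⟩ : (B \ A).Nonempty := Finset.card_pos.mp (by omega)
  obtain ⟨hbB, hbA⟩ := Finset.mem_sdiff.mp hb
  intro x hx
  refine mem_preseq_of_comp_update_mem (a := ⟨a, hBn a (hAB haA)⟩) (b := ⟨b, hBn b hbB⟩)
    haA (hAB haA) hbB hbA fun c hc => ?_
  exact hinv.preimage_comp _ x fun m => comp_update_mem_preseq hBB' hbA hc (hx m)

/-- if `|B \ A| = 1`, invariance under `P^n_{A,B}` is equivalent to
invariance under `P^n_{A,B'}` for every larger `B'`. -/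
theorem stmt_3 {k n : ℕ} (f : (Fin k → Bb) → Bb) (hf : FlatMono f)
    (A B : Finset ℕ) (hAB : A ⊆ B) (hBn : ∀ i ∈ B, i < n)
    (hBA : (B \ A).card = 1) :
    Invariant f (Preseq n A B) ↔
      ∀ B' : Finset ℕ, B ⊆ B' → (∀ i ∈ B', i < n) → Invariant f (Preseq n A B') :=
  stmt_3_general f A B hAB hBn hBA
end

section
/- Let f be a first-order monotone boolean function of arity k and let A ⊆ B ⊆ {1,…,n}. If f is invariant under P^n_{A,B}, then for every B' with A ⊆ B' ⊆ B, f is invariant under P^n_{A,B'}. -/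
/-! Invariance under `P^n_{A,B'}` is reduced to invariance under `P^n_{A,B}` by collapsing each
argument row outside `B'` to its value at a fixed index `i₀ ∈ B'`: a row in `P^n_{A,B'}` becomes a
row in `P^n_{A,B}`, it is unchanged on `B'`, and membership in `P^n_{A,B'}` only depends on the
coordinates in `B' ⊇ A`. -/

section Preseq

variable {n : ℕ} {A B B' : Finset ℕ}

theorem preseq_anti (hB : B' ⊆ B) : Preseq n A B ⊆ Preseq n A B' := by
  rintro d (hbot | hconst)
  · exact Or.inl hbot
  · exact Or.inr fun i j hi hj => hconst i j (hB hi) (hB hj)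

theorem mem_preseq_of_forall_notMem (hB : ∀ i : Fin n, (i : ℕ) ∉ B) (d : Fin n → Bb) :
    d ∈ Preseq n A B :=
  Or.inr fun i _ hi _ => absurd hi (hB i)

theorem mem_preseq_of_eqOn (hAB : A ⊆ B) {d e : Fin n → Bb}
    (hde : ∀ i : Fin n, (i : ℕ) ∈ B → d i = e i) (hd : d ∈ Preseq n A B) :
    e ∈ Preseq n A B := by
  rcases hd with ⟨i, hiA, hi⟩ | hconst
  · exact Or.inl ⟨i, hiA, hde i (hAB hiA) ▸ hi⟩
  · exact Or.inr fun i j hi hj => hde i hi ▸ hde j hj ▸ hconst i j hi hj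

def collapseOutside (B : Finset ℕ) (i₀ : Fin n) (d : Fin n → Bb) : Fin n → Bb :=
  fun i => if (i : ℕ) ∈ B then d i else d i₀

theorem collapseOutside_of_mem {i₀ i : Fin n} (d : Fin n → Bb) (hi : (i : ℕ) ∈ B) :
    collapseOutside B i₀ d i = d i :=
  if_pos hi

theorem collapseOutside_mem_preseq (hAB' : A ⊆ B') {i₀ : Fin n} (hi₀ : (i₀ : ℕ) ∈ B')
    {d : Fin n → Bb} (hd : d ∈ Preseq n A B') (C : Finset ℕ) :
    collapseOutside B' i₀ d ∈ Preseq n A C := by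
  rcases hd with ⟨i, hiA, hi⟩ | hconst
  · exact Or.inl ⟨i, hiA, (collapseOutside_of_mem d (hAB' hiA)).trans hi⟩
  · have h_eq : ∀ i, collapseOutside B' i₀ d i = d i₀ := fun i => by
      unfold collapseOutside
      split_ifs with hi
      exacts [hconst i i₀ hi hi₀, rfl]
    exact Or.inr fun i j _ _ => (h_eq i).trans (h_eq j).symm

theorem Invariant.preseq_of_subset {k : ℕ} {f : (Fin k → Bb) → Bb}
    (h : Invariant f (Preseq n A B)) (hAB' : A ⊆ B') (hB'B : B' ⊆ B) :
    Invariant f (Preseq n A B') := by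
  intro x hx
  by_cases hB' : ∃ i₀ : Fin n, (i₀ : ℕ) ∈ B'
  · obtain ⟨i₀, hi₀⟩ := hB'
    have hy := h (fun m => collapseOutside B' i₀ (x m))
      fun m => collapseOutside_mem_preseq hAB' hi₀ (hx m) B
    refine mem_preseq_of_eqOn hAB' (fun i hi => ?_) (preseq_anti hB'B hy)
    simp only [collapseOutside_of_mem _ hi]
  · exact mem_preseq_of_forall_notMem (not_exists.mp hB') _

end Preseq

theorem stmt_4_general {k n : ℕ} (f : (Fin k → Bb) → Bb)
    (A B : Finset ℕ)
    (h : Invariant f (Preseq n A B)) :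
    ∀ B' : Finset ℕ, A ⊆ B' → B' ⊆ B → Invariant f (Preseq n A B') :=
  fun _ hAB' hB'B => h.preseq_of_subset hAB' hB'B

/-- invariance under `P^n_{A,B}` implies invariance under `P^n_{A,B'}`
for every `B'` with `A ⊆ B' ⊆ B`. -/
theorem stmt_4 {k n : ℕ} (f : (Fin k → Bb) → Bb) (hf : FlatMono f)
    (A B : Finset ℕ) (hAB : A ⊆ B) (hBn : ∀ i ∈ B, i < n)
    (h : Invariant f (Preseq n A B)) :
    ∀ B' : Finset ℕ, A ⊆ B' → B' ⊆ B → Invariant f (Preseq n A B') :=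
  stmt_4_general f A B h
end

section
/- (Reduction Lemma, part 1.) Let f be a first-order monotone boolean function of arity k and let A ⊆ {1,…,n}. Then f is invariant under P^n_{A,A} if and only if f is invariant under P^{|A|}_{|A|,|A|}, the presequentiality relation of arity |A| in which both index sets are all of {1,…,|A|}. -/
/-! Membership in `P^n_{A,A}` only depends on the coordinates in `A`: it is the preimage of
`P^{|A|}_{|A|,|A|}` under restriction along the increasing enumeration of `A`. Invariance
transfers along restriction to the coordinates of any injection, since every tuple on those
coordinates extends to a tuple on all of them and `f` acts coordinatewise. -/

open Function

theorem invariant_preimage_comp_iff {k m n : ℕ} (f : (Fin k → Bb) → Bb) {g : Fin m → Fin n}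
    (hg : Injective g) (S : Set (Fin m → Bb)) :
    Invariant f ((· ∘ g) ⁻¹' S) ↔ Invariant f S := by
  constructor
  · intro H x hx
    have hext : ∀ j, extend g (x j) (fun _ => ⊥) ∘ g = x j := fun j =>
      funext (hg.extend_apply (x j) _)
    have := H (fun j => extend g (x j) (fun _ => ⊥)) fun j => by
      rw [Set.mem_preimage, hext j]; exact hx j
    simpa only [Set.mem_preimage, comp_def, hg.extend_apply] using this
  · intro H x hx
    exact H (fun j => x j ∘ g) hx

theorem preseq_eq_preimage_comp {m n : ℕ} {A : Finset ℕ} {g : Fin m → Fin n}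
    (hg : ∀ i : Fin n, (i : ℕ) ∈ A ↔ i ∈ Set.range g) :
    Preseq n A A = (· ∘ g) ⁻¹' PreseqSeg m m m := by
  have hgA : ∀ t, ((g t : Fin n) : ℕ) ∈ A := fun t => (hg (g t)).2 ⟨t, rfl⟩
  ext d
  simp only [PreseqSeg, Preseq, Set.mem_preimage, Set.mem_ofPred_eq, comp_apply,
    Finset.mem_range, Fin.is_lt, true_and, forall_const]
  refine or_congr ⟨?_, fun ⟨t, ht⟩ => ⟨g t, hgA t, ht⟩⟩ ⟨fun h t s => h _ _ (hgA t) (hgA s), ?_⟩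
  · rintro ⟨i, hi, hd⟩
    obtain ⟨t, rfl⟩ := (hg i).1 hi
    exact ⟨t, hd⟩
  · intro h i j hi hj
    obtain ⟨t, rfl⟩ := (hg i).1 hi
    obtain ⟨s, rfl⟩ := (hg j).1 hj
    exact h t s

theorem stmt_5_general {k n : ℕ} (f : (Fin k → Bb) → Bb)
    (A : Finset ℕ) (hAn : ∀ i ∈ A, i < n) :
    Invariant f (Preseq n A A) ↔ Invariant f (PreseqSeg A.card A.card A.card) := by
  let g : Fin A.card → Fin n := fun t =>
    ⟨A.orderEmbOfFin rfl t, hAn _ (A.orderEmbOfFin_mem rfl t)⟩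
  have hg_inj : Injective g := fun t s h =>
    (A.orderEmbOfFin rfl).injective (congrArg Fin.val h)
  have hg_range : ∀ i : Fin n, (i : ℕ) ∈ A ↔ i ∈ Set.range g := fun i => by
    rw [← Finset.mem_coe, ← A.range_orderEmbOfFin rfl]
    exact ⟨fun ⟨t, ht⟩ => ⟨t, Fin.ext ht⟩, fun ⟨t, ht⟩ => ⟨t, congrArg Fin.val ht⟩⟩
  rw [preseq_eq_preimage_comp hg_range]
  exact invariant_preimage_comp_iff f hg_inj _

/-- Reduction Lemma, part 1: invariance under `P^n_{A,A}` is equivalent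
to invariance under `P^{|A|}_{|A|,|A|}`. -/
theorem stmt_5 {k n : ℕ} (f : (Fin k → Bb) → Bb) (hf : FlatMono f)
    (A : Finset ℕ) (hAn : ∀ i ∈ A, i < n) :
    Invariant f (Preseq n A A) ↔ Invariant f (PreseqSeg A.card A.card A.card) :=
  stmt_5_general f A hAn
end

section
/- (Closure Lemma.) Let f be a first-order monotone boolean function of arity k and let m ≥ 0. Then: (1) if f is invariant under P^{m+1}_{m,m+1} then f is invariant under P^m_{m,m}; (2) if f is invariant under P^{m+1}_{m+1,m+1} then f is invariant under P^m_{m,m}; (3) if f is invariant under P^{m+2}_{m+1,m+2} then f is invariant under P^{m+1}_{m,m+1}. -/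
/-!
Since `f` acts coordinatewise, invariance under `R'` implies invariance under every `R` with
`d ∈ R ↔ d ∘ g ∈ R'` for a fixed reindexing `g` of the coordinates. Each relation in the
conclusion is such a pullback of the one in the hypothesis, for the `g` that duplicates
column `0` into the extra coordinate (`foldLast`, resp. `foldPenult` when the extra coordinate
is the one before the last): `P_{A,B}` is the pullback of `P_{A',B'}` whenever `g` maps the
coordinates in `A'` onto those in `A` and those in `B'` onto those in `B`.
For `m = 0` the conclusions are about relations of arity at most one, which contain every tuple.
-/

theorem preseq_eq_univ_of_le_one {n : ℕ} (hn : n ≤ 1) (A B : Finset ℕ) :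
    Preseq n A B = Set.univ :=
  Set.eq_univ_of_forall fun _ => Or.inr fun i j _ _ => by
    rw [Fin.ext (by omega : (i : ℕ) = j)]

theorem invariant_univ {k n : ℕ} (f : (Fin k → Bb) → Bb) :
    Invariant f (Set.univ : Set (Fin n → Bb)) :=
  fun _ _ => Set.mem_univ _

theorem Invariant.of_comp_mem_iff {k n n' : ℕ} {f : (Fin k → Bb) → Bb}
    {R : Set (Fin n → Bb)} {R' : Set (Fin n' → Bb)} (g : Fin n' → Fin n)
    (hR : ∀ d, d ∘ g ∈ R' ↔ d ∈ R) (h : Invariant f R') : Invariant f R :=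
  fun x hx => (hR _).1 (h (fun a => x a ∘ g) fun a => (hR _).2 (hx a))

theorem comp_mem_preseq_iff {n n' : ℕ} {A B A' B' : Finset ℕ} (g : Fin n' → Fin n)
    (hA : g '' {j | (j : ℕ) ∈ A'} = {i : Fin n | (i : ℕ) ∈ A})
    (hB : g '' {j | (j : ℕ) ∈ B'} = {i : Fin n | (i : ℕ) ∈ B}) (d : Fin n → Bb) :
    d ∘ g ∈ Preseq n' A' B' ↔ d ∈ Preseq n A B := by
  simp only [Set.ext_iff, Set.mem_image, Set.mem_ofPred_eq] at hA hB
  simp only [Preseq, Set.mem_ofPred_eq, Function.comp_apply, ← hA, ← hB]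
  refine or_congr ?_ ?_
  · simp only [exists_exists_and_eq_and]
  · constructor
    · rintro h _ _ ⟨j, hj, rfl⟩ ⟨j', hj', rfl⟩
      exact h j j' hj hj'
    · exact fun h j j' hj hj' => h _ _ ⟨j, hj, rfl⟩ ⟨j', hj', rfl⟩

theorem Invariant.preseq_of_image_eq {k n n' : ℕ} {f : (Fin k → Bb) → Bb}
    {A B A' B' : Finset ℕ} (g : Fin n' → Fin n)
    (hA : g '' {j | (j : ℕ) ∈ A'} = {i : Fin n | (i : ℕ) ∈ A})
    (hB : g '' {j | (j : ℕ) ∈ B'} = {i : Fin n | (i : ℕ) ∈ B})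
    (h : Invariant f (Preseq n' A' B')) : Invariant f (Preseq n A B) :=
  h.of_comp_mem_iff g (comp_mem_preseq_iff g hA hB)

theorem setOf_coe_mem_range_self (n : ℕ) :
    {i : Fin n | (i : ℕ) ∈ Finset.range n} = Set.univ := by
  simp

theorem setOf_coe_mem_range_eq_range_castSucc (n : ℕ) :
    {i : Fin (n + 1) | (i : ℕ) ∈ Finset.range n} = Set.range Fin.castSucc := by
  simp only [Finset.mem_range, Fin.range_castSucc]

def foldLast (n : ℕ) : Fin (n + 2) → Fin (n + 1) :=
  Fin.snoc (α := fun _ => Fin (n + 1)) id 0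

def foldPenult (n : ℕ) : Fin (n + 3) → Fin (n + 2) :=
  Fin.snoc (α := fun _ => Fin (n + 2)) (Fin.castSucc ∘ foldLast n) (Fin.last _)

theorem foldLast_comp_castSucc (n : ℕ) : foldLast n ∘ Fin.castSucc = id :=
  Fin.snoc_comp_castSucc

theorem range_foldLast (n : ℕ) : Set.range (foldLast n) = Set.univ :=
  Set.range_eq_univ.2 fun i => ⟨i.castSucc, congrFun (foldLast_comp_castSucc n) i⟩

theorem image_range_castSucc_foldLast (n : ℕ) :
    foldLast n '' Set.range Fin.castSucc = Set.univ := by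
  rw [← Set.range_comp, foldLast_comp_castSucc, Set.range_id]

theorem foldPenult_comp_castSucc (n : ℕ) :
    foldPenult n ∘ Fin.castSucc = Fin.castSucc ∘ foldLast n :=
  Fin.snoc_comp_castSucc

theorem range_foldPenult (n : ℕ) : Set.range (foldPenult n) = Set.univ := by
  rw [foldPenult, Fin.range_snoc, Set.range_comp, range_foldLast, Set.image_univ]
  refine Set.eq_univ_of_forall fun i => ?_
  rcases Fin.eq_castSucc_or_eq_last i with ⟨j, rfl⟩ | rfl
  · exact Set.mem_insert_of_mem _ (Set.mem_range_self j)
  · exact Set.mem_insert _ _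

theorem image_range_castSucc_foldPenult (n : ℕ) :
    foldPenult n '' Set.range Fin.castSucc = Set.range Fin.castSucc := by
  rw [← Set.range_comp, foldPenult_comp_castSucc, Set.range_comp, range_foldLast, Set.image_univ]

theorem stmt_7_general {k : ℕ} (f : (Fin k → Bb) → Bb) (m : ℕ) :
    (Invariant f (PreseqSeg (m + 1) m (m + 1)) → Invariant f (PreseqSeg m m m)) ∧
    (Invariant f (PreseqSeg (m + 1) (m + 1) (m + 1)) → Invariant f (PreseqSeg m m m)) ∧
    (Invariant f (PreseqSeg (m + 2) (m + 1) (m + 2)) →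
      Invariant f (PreseqSeg (m + 1) m (m + 1))) := by
  rcases m with _ | m
  · simp only [PreseqSeg, preseq_eq_univ_of_le_one zero_le_one, preseq_eq_univ_of_le_one le_rfl,
      invariant_univ, implies_true, and_self]
  · refine ⟨fun h => h.preseq_of_image_eq (foldLast m) ?_ ?_,
      fun h => h.preseq_of_image_eq (foldLast m) ?_ ?_,
      fun h => h.preseq_of_image_eq (foldPenult m) ?_ ?_⟩ <;>
    simp only [setOf_coe_mem_range_self, setOf_coe_mem_range_eq_range_castSucc, Set.image_univ,
      range_foldLast, image_range_castSucc_foldLast, range_foldPenult,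
      image_range_castSucc_foldPenult]

/-- Closure Lemma. -/
theorem stmt_7 {k : ℕ} (f : (Fin k → Bb) → Bb) (hf : FlatMono f) (m : ℕ) :
    (Invariant f (PreseqSeg (m + 1) m (m + 1)) → Invariant f (PreseqSeg m m m)) ∧
    (Invariant f (PreseqSeg (m + 1) (m + 1) (m + 1)) → Invariant f (PreseqSeg m m m)) ∧
    (Invariant f (PreseqSeg (m + 2) (m + 1) (m + 2)) →
      Invariant f (PreseqSeg (m + 1) m (m + 1))) :=
  stmt_7_general f m
end

section
/- Let f be a first-order monotone boolean function of arity k and suppose cc(f) = c is finite (so π₁(tr f) has a linearly coherent subset of cardinality ≥ 2, and c is the minimum such cardinality). Then f is invariant under P^c_{c−1,c} but f is not invariant under P^{c+1}_{c,c+1}. -/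
section FlatOrder

variable {k : ℕ}

lemma bLE.eq_of_ne_bot {a b : Bb} (h : bLE a b) (ha : a ≠ ⊥) : a = b := h.resolve_left ha

lemma bLE.antisymm {a b : Bb} (hab : bLE a b) (hba : bLE b a) : a = b := by
  rcases hab with rfl | rfl
  · rcases hba with h | h <;> exact h.symm
  · rfl

lemma tupLE.refl (x : Fin k → Bb) : tupLE x x := fun _ => Or.inr rfl

lemma tupLE.trans {x y z : Fin k → Bb} (hxy : tupLE x y) (hyz : tupLE y z) : tupLE x z := by
  intro i
  rcases hxy i with h | h
  · exact Or.inl h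
  · exact h ▸ hyz i

lemma tupLE.antisymm {x y : Fin k → Bb} (hxy : tupLE x y) (hyx : tupLE y x) : x = y :=
  funext fun i => bLE.antisymm (hxy i) (hyx i)

instance : IsTrans (Fin k → Bb) tupLT where
  trans _ _ _ hxy hyz :=
    ⟨tupLE.trans hxy.1 hyz.1, fun hxz => hyz.2 (tupLE.antisymm hyz.1 (hxz ▸ hxy.1))⟩

instance : Std.Irrefl (tupLT (k := k)) where
  irrefl _ h := h.2 rfl

lemma exists_traceDom_le {f : (Fin k → Bb) → Bb} (hf : FlatMono f) {v : Fin k → Bb}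
    (hv : f v ≠ ⊥) : ∃ u, tupLE u v ∧ u ∈ traceDom f ∧ f u = f v := by
  obtain ⟨u, ⟨huv, hu⟩, hmin⟩ := (Finite.wellFounded_of_trans_of_irrefl tupLT).has_min
    {u | tupLE u v ∧ f u ≠ ⊥} ⟨v, tupLE.refl v, hv⟩
  refine ⟨u, huv, ⟨hu, fun u' hu' => ?_⟩, (hf u v huv).eq_of_ne_bot hu⟩
  by_contra hne
  exact hmin u' ⟨tupLE.trans hu'.1 huv, hne⟩ hu'

end FlatOrder

section Coherence

variable {k : ℕ} {f : (Fin k → Bb) → Bb}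

lemma linCoherent_range_iff {ι : Type*} {U : ι → Fin k → Bb} :
    LinCoherent (Set.range U) ↔ ∀ j, (∀ i, U i j ≠ ⊥) → ∀ i i', U i j = U i' j := by
  simp only [LinCoherent, Set.forall_mem_range]

lemma cc_le_card {S : Finset (Fin k → Bb)} (hS : ↑S ⊆ traceDom f) (hS2 : 2 ≤ S.card)
    (hcoh : LinCoherent (↑S : Set (Fin k → Bb))) : cc f ≤ S.card :=
  sInf_le ⟨S, hS, hS2, hcoh, rfl⟩

lemma exists_card_eq_cc (h : cc f ≠ ⊤) :
    ∃ S : Finset (Fin k → Bb), ↑S ⊆ traceDom f ∧ 2 ≤ S.card ∧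
      LinCoherent (↑S : Set (Fin k → Bb)) ∧ (S.card : ℕ∞) = cc f := by
  have hne : {c : ℕ∞ | ∃ S : Finset (Fin k → Bb), ↑S ⊆ traceDom f ∧ 2 ≤ S.card ∧
      LinCoherent (↑S : Set (Fin k → Bb)) ∧ c = (S.card : ℕ∞)}.Nonempty := by
    by_contra hempty
    exact h (by rw [cc, Set.not_nonempty_iff_eq_empty.mp hempty, sInf_empty])
  obtain ⟨S, hS, hS2, hcoh, hcard⟩ := csInf_mem hne
  exact ⟨S, hS, hS2, hcoh, hcard.symm⟩

lemma subsingleton_range_of_card_lt_cc {ι : Type*} [Fintype ι] {U : ι → Fin k → Bb}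
    (hU : Set.range U ⊆ traceDom f) (hcoh : LinCoherent (Set.range U))
    (hcc : (Fintype.card ι : ℕ∞) < cc f) : (Set.range U).Subsingleton := by
  classical
  by_contra hnt
  have himage : (↑(Finset.univ.image U) : Set (Fin k → Bb)) = Set.range U := by simp
  have h2 : 2 ≤ (Finset.univ.image U).card :=
    Finset.one_lt_card_iff_nontrivial.mpr (by
      rw [Finset.Nontrivial, himage]; exact Set.not_subsingleton_iff.mp hnt)
  have hle := cc_le_card (himage ▸ hU) h2 (himage ▸ hcoh)
  have hcard : (Finset.univ.image U).card ≤ Fintype.card ι := Finset.card_image_le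
  exact absurd (hle.trans (by exact_mod_cast hcard)) (not_le.mpr hcc)

end Coherence

section Presequentiality

variable {k : ℕ} {f : (Fin k → Bb) → Bb}

lemma eq_of_mem_preseqSeg {n m : ℕ} {d : Fin n → Bb} (hd : d ∈ PreseqSeg n m n)
    (hne : ∀ i : Fin n, (i : ℕ) < m → d i ≠ ⊥) (i j : Fin n) : d i = d j := by
  rcases hd with ⟨a, ha, hbot⟩ | hconst
  · exact absurd hbot (hne a (Finset.mem_range.mp ha))
  · exact hconst i j (by simp) (by simp)

theorem invariant_preseqSeg_of_lt_cc (hf : FlatMono f) {m n : ℕ} (hm : 0 < m) (hmn : m ≤ n)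
    (hcc : (m : ℕ∞) < cc f) : Invariant f (PreseqSeg n m n) := by
  intro x hx
  by_cases hbot : ∃ i : Fin n, (i : ℕ) ∈ Finset.range m ∧ f (fun j => x j i) = ⊥
  · exact Or.inl hbot
  push Not at hbot
  choose U hUle hUtr _ using fun i : Fin m =>
    exists_traceDom_le hf (hbot (Fin.castLE hmn i) (by simp))
  have hUx : ∀ j i, U i j ≠ ⊥ → U i j = x j (Fin.castLE hmn i) := fun j i h =>
    (hUle i j).eq_of_ne_bot h
  have hcol : ∀ j, (∀ i, U i j ≠ ⊥) → ∀ a b, x j a = x j b := fun j hj =>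
    eq_of_mem_preseqSeg (hx j) fun a ha => by
      have h := hUx j ⟨a, ha⟩ (hj _)
      simp only [Fin.castLE_mk, Fin.eta] at h
      exact h ▸ hj _
  have hcoh : LinCoherent (Set.range U) := linCoherent_range_iff.mpr fun j hj i i' => by
    rw [hUx j i (hj i), hUx j i' (hj i'), hcol j hj]
  have hU := subsingleton_range_of_card_lt_cc (Set.range_subset_iff.mpr hUtr) hcoh
    (by simpa using hcc)
  set u := U ⟨0, hm⟩
  have hule : ∀ a, tupLE u (fun j => x j a) := by
    intro a j
    by_cases hj : u j = ⊥
    · exact Or.inl hj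
    have hj' : ∀ i, U i j ≠ ⊥ := fun i => by rwa [hU ⟨i, rfl⟩ ⟨⟨0, hm⟩, rfl⟩]
    exact Or.inr ((hUx j _ hj).trans (hcol j hj' _ a))
  have hfu : ∀ a, f (fun j => x j a) = f u := fun a =>
    ((hf _ _ (hule a)).eq_of_ne_bot (hUtr _).1).symm
  exact Or.inr fun a b _ _ => (hfu a).trans (hfu b).symm

lemma exists_apply_ne_of_linCoherent {S : Set (Fin k → Bb)} (hS : S ⊆ traceDom f)
    (hS2 : S.Nontrivial) (hcoh : LinCoherent S) {v : Fin k → Bb} (hv : v ∈ S) :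
    ∃ w, (∀ j, (∀ u ∈ S, u j ≠ ⊥) → w j = v j) ∧ f w ≠ f v := by
  classical
  by_cases hall : ∀ u ∈ S, f u = f v
  · let w : Fin k → Bb := fun j => if ∀ u ∈ S, u j ≠ ⊥ then v j else ⊥
    have hwle : ∀ u ∈ S, tupLE w u := fun u hu j => by
      by_cases hj : ∀ u ∈ S, u j ≠ ⊥
      · exact Or.inr ((if_pos hj).trans (hcoh j hj v hv u hu))
      · exact Or.inl (if_neg hj)
    obtain ⟨u, hu, huv⟩ := hS2.exists_ne v
    have hwv : w ≠ v := fun h => (hS hv).1 ((hS hu).2 v ⟨h ▸ hwle u hu, huv.symm⟩)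
    refine ⟨w, fun j hj => if_pos hj, ?_⟩
    rw [(hS hv).2 w ⟨hwle v hv, hwv⟩]
    exact (hS hv).1.symm
  · push Not at hall
    obtain ⟨u, hu, hne⟩ := hall
    exact ⟨u, fun j hj => hcoh j hj u hu v hv, hne⟩

theorem not_invariant_preseqSeg_of_linCoherent {S : Finset (Fin k → Bb)}
    (hS : ↑S ⊆ traceDom f) (hS2 : 2 ≤ S.card) (hcoh : LinCoherent (↑S : Set (Fin k → Bb)))
    {n : ℕ} (hn : S.card < n) : ¬ Invariant f (PreseqSeg n S.card n) := by
  intro hinv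
  set e : Fin S.card → Fin k → Bb := fun i => S.equivFin.symm i
  have he : ∀ i, e i ∈ S := fun i => (S.equivFin.symm i).2
  have he_surj : ∀ u ∈ S, ∃ i, e i = u := fun u hu => ⟨S.equivFin ⟨u, hu⟩, by simp [e]⟩
  set v := e ⟨0, by omega⟩
  obtain ⟨w, hwv, hfw⟩ := exists_apply_ne_of_linCoherent hS
    (Finset.one_lt_card_iff_nontrivial.mp hS2) hcoh (he _)
  let row : Fin n → Fin k → Bb := fun a => if h : (a : ℕ) < S.card then e ⟨a, h⟩ else w
  have hcol : ∀ j, (fun a => row a j) ∈ PreseqSeg n S.card n := by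
    intro j
    by_cases hj : ∀ u ∈ S, u j ≠ ⊥
    · have hrow : ∀ a, row a j = v j := fun a => by
        unfold row
        split_ifs
        · exact hcoh j hj _ (he _) v (he _)
        · exact hwv j hj
      exact Or.inr fun a b _ _ => (hrow a).trans (hrow b).symm
    · push Not at hj
      obtain ⟨u, hu, hbot⟩ := hj
      obtain ⟨i, rfl⟩ := he_surj u hu
      exact Or.inl ⟨Fin.castLE hn.le i, by simp, by simp [row, hbot]⟩
  rcases hinv (fun j a => row a j) hcol with ⟨a, ha, hbot⟩ | hconst
  · have ha' : (a : ℕ) < S.card := Finset.mem_range.mp ha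
    exact (hS (he ⟨a, ha'⟩)).1 (by simpa [row, ha'] using hbot)
  · have h0c := hconst ⟨0, by omega⟩ ⟨S.card, hn⟩ (Finset.mem_range.mpr (by omega))
      (Finset.mem_range.mpr hn)
    have hrow0 : row ⟨0, by omega⟩ = v := dif_pos (show 0 < S.card by omega)
    have hrowc : row ⟨S.card, hn⟩ = w := dif_neg (lt_irrefl _)
    simp only [hrow0, hrowc] at h0c
    exact hfw h0c.symm

end Presequentiality

/-- if `cc f = c` is finite, then `f` is invariant under `P^c_{c-1,c}`
but not under `P^{c+1}_{c,c+1}`. -/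
theorem stmt_9 {k : ℕ} (f : (Fin k → Bb) → Bb) (hf : FlatMono f)
    (c : ℕ) (hc : cc f = (c : ℕ∞)) :
    Invariant f (PreseqSeg c (c - 1) c) ∧
    ¬ Invariant f (PreseqSeg (c + 1) c (c + 1)) := by
  obtain ⟨S, hS, hS2, hcoh, hcard⟩ := exists_card_eq_cc (f := f) (by simp [hc])
  obtain rfl : S.card = c := by exact_mod_cast hcard.trans hc
  refine ⟨invariant_preseqSeg_of_lt_cc hf (by omega) (by omega) ?_,
    not_invariant_preseqSeg_of_linCoherent hS hS2 hcoh (by omega)⟩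
  rw [hc]
  exact_mod_cast (by omega : S.card - 1 < S.card)
end

section
/- Let f be a first-order monotone boolean function of arity k such that π₁(tr f) has no linearly coherent subset of cardinality ≥ 2 (i.e. cc(f) = ∞). Then f is invariant under P^{m+1}_{m,m+1} for every m ≥ 0. -/
lemma tupLE_refl {k : ℕ} (a : Fin k → Bb) : tupLE a a := fun _ => Or.inr rfl

lemma tupLE_trans {k : ℕ} {a b c : Fin k → Bb} (h1 : tupLE a b) (h2 : tupLE b c) :
    tupLE a c := by
  intro i
  rcases h1 i with h | h
  · exact Or.inl h
  · rw [h]; exact h2 i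

/-- support of a tuple -/
def tsupp {k : ℕ} (v : Fin k → Bb) : Finset (Fin k) :=
  Finset.univ.filter (fun i => v i ≠ ⊥)

lemma tsupp_lt {k : ℕ} {v' v : Fin k → Bb} (h : tupLT v' v) :
    (tsupp v').card < (tsupp v).card := by
  apply Finset.card_lt_card
  constructor
  · intro i hi
    simp only [tsupp, Finset.mem_filter, Finset.mem_univ, true_and] at hi ⊢
    rcases h.1 i with hb | hb
    · exact absurd hb hi
    · rw [← hb]; exact hi
  · intro hsub
    apply h.2
    funext i
    rcases h.1 i with hb | hb
    · by_contra hne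
      have hvi : v i ≠ ⊥ := by intro hh; exact hne (by rw [hb, hh])
      have : i ∈ tsupp v' := hsub (by simp [tsupp, hvi])
      simp [tsupp, hb] at this
    · exact hb

lemma exists_trace {k : ℕ} (f : (Fin k → Bb) → Bb) (hf : FlatMono f) :
    ∀ N (c : Fin k → Bb), (tsupp c).card ≤ N → f c ≠ ⊥ →
      ∃ v, tupLE v c ∧ v ∈ traceDom f ∧ f v = f c := by
  intro N
  induction N with
  | zero =>
    intro c hcard hfc
    refine ⟨c, tupLE_refl c, ⟨hfc, ?_⟩, rfl⟩
    intro v' hlt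
    have := tsupp_lt hlt
    omega
  | succ N ih =>
    intro c hcard hfc
    by_cases htr : ∀ v', tupLT v' c → f v' = ⊥
    · exact ⟨c, tupLE_refl c, ⟨hfc, htr⟩, rfl⟩
    · push_neg at htr
      obtain ⟨c', hlt, hfc'⟩ := htr
      have hcard' : (tsupp c').card ≤ N := by have := tsupp_lt hlt; omega
      obtain ⟨v, hv1, hv2, hv3⟩ := ih c' hcard' hfc'
      refine ⟨v, tupLE_trans hv1 hlt.1, hv2, ?_⟩
      rw [hv3]
      rcases hf c' c hlt.1 with h | h
      · exact absurd h hfc'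
      · exact h

lemma cc_top_card {k : ℕ} {f : (Fin k → Bb) → Bb} (hc : cc f = ⊤)
    (S : Finset (Fin k → Bb)) (hS : ↑S ⊆ traceDom f)
    (hcoh : LinCoherent (↑S : Set (Fin k → Bb))) : S.card ≤ 1 := by
  by_contra h
  push_neg at h
  have hmem : (S.card : ℕ∞) ∈ {c : ℕ∞ | ∃ S' : Finset (Fin k → Bb),
      ↑S' ⊆ traceDom f ∧ 2 ≤ S'.card ∧ LinCoherent (↑S' : Set (Fin k → Bb)) ∧
      c = (S'.card : ℕ∞)} := ⟨S, hS, by omega, hcoh, rfl⟩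
  have hle := sInf_le hmem
  unfold cc at hc
  rw [hc] at hle
  have : (S.card : ℕ∞) = ⊤ := top_le_iff.mp hle
  exact (WithTop.coe_ne_top) this

/-- if `cc f = ∞`, then `f` is invariant under `P^{m+1}_{m,m+1}` for
every `m ≥ 0`. -/
theorem stmt_10 {k : ℕ} (f : (Fin k → Bb) → Bb) (hf : FlatMono f)
    (hc : cc f = ⊤) :
    ∀ m : ℕ, Invariant f (PreseqSeg (m + 1) m (m + 1)) := by
  intro m x hx
  simp only [PreseqSeg, Preseq, Set.mem_setOf_eq]
  set c : Fin (m + 1) → (Fin k → Bb) := fun i => fun m' => x m' i with hc_def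
  by_cases hbot : ∃ i : Fin (m + 1), (i : ℕ) ∈ Finset.range m ∧ f (c i) = ⊥
  · exact Or.inl hbot
  push_neg at hbot
  right
  intro i j _ _
  -- case m = 0 : trivial
  rcases Nat.eq_zero_or_pos m with hm | hm
  · subst hm
    have : i = j := by ext; omega
    rw [this]
  -- now m ≥ 1
  have hcol : ∀ a : Fin m, f (c a.castSucc) ≠ ⊥ := by
    intro a
    exact hbot a.castSucc (by simp [Fin.castSucc])
  choose v hv1 hv2 hv3 using fun a : Fin m =>
    exists_trace f hf _ (c a.castSucc) le_rfl (hcol a)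
  -- rows with no ⊥ in the first m columns are constant
  have hrow : ∀ jj : Fin k, (∀ a : Fin m, x jj a.castSucc ≠ ⊥) →
      ∀ i1 i2 : Fin (m + 1), x jj i1 = x jj i2 := by
    intro jj hne i1 i2
    rcases hx jj with ⟨i0, hi0, hbot0⟩ | hconst
    · simp only [Finset.mem_range] at hi0
      exact absurd (by
        have : (⟨(i0 : ℕ), by omega⟩ : Fin m).castSucc = i0 := by
          ext; simp
        rw [this]; exact hbot0) (hne ⟨(i0 : ℕ), by omega⟩)
    · exact hconst i1 i2 (by simp [Finset.mem_range]; omega) (by simp [Finset.mem_range]; omega)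
  -- coordinate facts: v a j ≠ ⊥ → x j a.castSucc = v a j
  have hcoord : ∀ (a : Fin m) (jj : Fin k), v a jj ≠ ⊥ → x jj a.castSucc = v a jj := by
    intro a jj hne
    rcases hv1 a jj with h | h
    · exact absurd h hne
    · exact h.symm
  -- the image of v is linearly coherent
  set S : Finset (Fin k → Bb) := Finset.image v Finset.univ with hS_def
  have hScoh : LinCoherent (↑S : Set (Fin k → Bb)) := by
    intro jj hne w hw w' hw'
    simp only [hS_def, Finset.coe_image, Finset.coe_univ, Set.image_univ,
      Set.mem_range] at hw hw'
    obtain ⟨a, rfl⟩ := hw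
    obtain ⟨b, rfl⟩ := hw'
    have hne' : ∀ a : Fin m, v a jj ≠ ⊥ := by
      intro a'
      exact hne (v a') (by simp [hS_def])
    have hxne : ∀ a : Fin m, x jj a.castSucc ≠ ⊥ := by
      intro a'
      rw [hcoord a' jj (hne' a')]
      exact hne' a'
    have := hrow jj hxne a.castSucc b.castSucc
    rw [hcoord a jj (hne' a), hcoord b jj (hne' b)] at this
    exact this
  have hSsub : ↑S ⊆ traceDom f := by
    intro w hw
    simp only [hS_def, Finset.coe_image, Finset.coe_univ, Set.image_univ,
      Set.mem_range] at hw
    obtain ⟨a, rfl⟩ := hw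
    exact hv2 a
  have hcard := cc_top_card hc S hSsub hScoh
  have hveq : ∀ a b : Fin m, v a = v b := by
    intro a b
    have h1 : v a ∈ S := by simp [hS_def]
    have h2 : v b ∈ S := by simp [hS_def]
    exact Finset.card_le_one.mp hcard _ h1 _ h2
  set a0 : Fin m := ⟨0, hm⟩ with ha0
  -- v a0 ≤ every column
  have hle : ∀ i' : Fin (m + 1), tupLE (v a0) (c i') := by
    intro i' jj
    by_cases hne : v a0 jj = ⊥
    · exact Or.inl hne
    · right
      have hne' : ∀ a : Fin m, v a jj ≠ ⊥ := by
        intro a; rw [hveq a a0]; exact hne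
      have hxne : ∀ a : Fin m, x jj a.castSucc ≠ ⊥ := by
        intro a'
        rw [hcoord a' jj (hne' a')]
        exact hne' a'
      have hrc := hrow jj hxne a0.castSucc i'
      have := hcoord a0 jj hne
      show v a0 jj = x jj i'
      rw [← hrc, this]
  have hval : ∀ i' : Fin (m + 1), f (c i') = f (v a0) := by
    intro i'
    rcases hf (v a0) (c i') (hle i') with h | h
    · exact absurd h (hv2 a0).1
    · exact h.symm
  show f (c i) = f (c j)
  rw [hval i, hval j]
end

section
/- Let f be a first-order monotone boolean function of arity k+1, fix an index i ∈ {1,…,k+1} and a value y ∈ 𝔹, and define the first-order monotone boolean function f' of arity k by f'(x₁,…,x_k) = f(x₁,…,x_{i−1}, y, x_i,…,x_k). Then cc(f') ≥ cc(f) in ℕ∞. -/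
/-!
A trace point `v` of the restriction `f' = f (i.insertNth y ·)` lifts to a trace point of `f`:
below `i.insertNth y v` there is a minimal point `w` where `f` is defined, and minimality of `v`
together with monotonicity of `f` forces `w = i.insertNth a v` for some `a ⊑ y`. This lifting is
injective, and it preserves linear coherence: at the new coordinate the lifted points carry
either `⊥` or `y`. Hence every coherent set witnessing `cc f'` yields one of the same size for
`cc f`.
-/

lemma bLE_trans {a b c : Bb} (hab : bLE a b) (hbc : bLE b c) : bLE a c := by
  rcases hab with rfl | rfl
  · exact Or.inl rfl
  · exact hbc

lemma tupLE_trans_s13 {k : ℕ} {x y z : Fin k → Bb} (hxy : tupLE x y) (hyz : tupLE y z) :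
    tupLE x z := fun j => bLE_trans (hxy j) (hyz j)

lemma tupLE_insertNth_iff {k : ℕ} (i : Fin (k + 1)) (a b : Bb) (x y : Fin k → Bb) :
    tupLE (i.insertNth a x) (i.insertNth b y) ↔ bLE a b ∧ tupLE x y := by
  simp only [tupLE, Fin.forall_iff_succAbove i, Fin.insertNth_apply_same,
    Fin.insertNth_apply_succAbove]

lemma FlatMono.ne_bot_of_tupLE {k : ℕ} {f : (Fin k → Bb) → Bb} (hf : FlatMono f)
    {x y : Fin k → Bb} (hxy : tupLE x y) (hx : f x ≠ ⊥) : f y ≠ ⊥ := by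
  rcases hf x y hxy with h | h
  · exact absurd h hx
  · exact h ▸ hx

def defSupport {k : ℕ} (v : Fin k → Bb) : Finset (Fin k) :=
  Finset.univ.filter fun j => v j ≠ ⊥

lemma defSupport_ssubset_of_tupLT {k : ℕ} {u v : Fin k → Bb} (h : tupLT u v) :
    defSupport u ⊂ defSupport v := by
  obtain ⟨hle, hne⟩ := h
  refine Finset.ssubset_iff_subset_ne.2 ⟨fun j hj => ?_, fun hsupp => hne (funext fun j => ?_)⟩
  · simp only [defSupport, Finset.mem_filter, Finset.mem_univ, true_and] at hj ⊢
    rcases hle j with hu | hu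
    · exact absurd hu hj
    · exact hu ▸ hj
  · rcases hle j with hu | hu
    · by_contra hne
      have hj : j ∈ defSupport u := hsupp ▸ by simpa [defSupport, hu] using Ne.symm hne
      simp [defSupport, hu] at hj
    · exact hu

lemma exists_tupLE_mem_traceDom {k : ℕ} (f : (Fin k → Bb) → Bb) {v : Fin k → Bb}
    (hv : f v ≠ ⊥) : ∃ w, tupLE w v ∧ w ∈ traceDom f := by
  obtain ⟨w, ⟨hwv, hw⟩, hmin⟩ :=
    (InvImage.wf (fun u => (defSupport u).card) wellFounded_lt).has_min
      {u | tupLE u v ∧ f u ≠ ⊥} ⟨v, fun _ => Or.inr rfl, hv⟩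
  refine ⟨w, hwv, hw, fun u hu => ?_⟩
  by_contra hfu
  exact hmin u ⟨tupLE_trans_s13 hu.1 hwv, hfu⟩
    (Finset.card_lt_card (defSupport_ssubset_of_tupLT hu))

lemma exists_insertNth_mem_traceDom {k : ℕ} {f : (Fin (k + 1) → Bb) → Bb} (hf : FlatMono f)
    (i : Fin (k + 1)) (y : Bb) {v : Fin k → Bb}
    (hv : v ∈ traceDom fun x => f (i.insertNth y x)) :
    ∃ a, bLE a y ∧ i.insertNth a v ∈ traceDom f := by
  obtain ⟨w, hwv, hw⟩ := exists_tupLE_mem_traceDom f hv.1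
  rw [← Fin.insertNth_self_removeNth i w, tupLE_insertNth_iff] at hwv
  have hdef : f (i.insertNth y (i.removeNth w)) ≠ ⊥ := by
    refine hf.ne_bot_of_tupLE ?_ hw.1
    conv_lhs => rw [← Fin.insertNth_self_removeNth i w]
    exact (tupLE_insertNth_iff _ _ _ _ _).2 ⟨hwv.1, fun _ => Or.inr rfl⟩
  have hrem : i.removeNth w = v := by
    by_contra hne
    exact hdef (hv.2 _ ⟨hwv.2, hne⟩)
  refine ⟨w i, hwv.1, ?_⟩
  rwa [← hrem, Fin.insertNth_self_removeNth]

lemma LinCoherent.image_insertNth {k : ℕ} {S : Set (Fin k → Bb)} (hS : LinCoherent S)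
    (i : Fin (k + 1)) {y : Bb} {a : (Fin k → Bb) → Bb} (ha : ∀ v ∈ S, bLE (a v) y) :
    LinCoherent ((fun v => i.insertNth (a v) v) '' S) := by
  intro j hdef
  simp only [Set.forall_mem_image] at hdef ⊢
  intro u hu w hw
  rcases eq_or_ne j i with rfl | hj
  · simp only [Fin.insertNth_apply_same] at hdef ⊢
    rw [(ha u hu).resolve_left (hdef hu), (ha w hw).resolve_left (hdef hw)]
  · obtain ⟨j, rfl⟩ := Fin.exists_succAbove_eq hj
    simp only [Fin.insertNth_apply_succAbove] at hdef ⊢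
    exact hS j hdef u hu w hw

/-- fixing one argument of `f` cannot decrease the coefficient of
coherence. -/
theorem stmt_13 {k : ℕ} (f : (Fin (k + 1) → Bb) → Bb) (hf : FlatMono f)
    (i : Fin (k + 1)) (y : Bb) :
    cc f ≤ cc (fun x : Fin k → Bb => f (i.insertNth y x)) := by
  refine sInf_le_sInf ?_
  rintro _ ⟨S, hS, hcard, hcoh, rfl⟩
  choose! a hay hmem using fun v (hv : v ∈ traceDom fun x => f (i.insertNth y x)) =>
    exists_insertNth_mem_traceDom hf i y hv
  have hinj : Function.Injective fun v : Fin k → Bb => (i.insertNth (a v) v : Fin (k + 1) → Bb) :=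
    fun u w h => by simpa only [Fin.removeNth_insertNth] using congrArg i.removeNth h
  refine ⟨S.image fun v => (i.insertNth (a v) v : Fin (k + 1) → Bb), ?_, ?_, ?_, ?_⟩
  · rw [Finset.coe_image]
    rintro _ ⟨v, hv, rfl⟩
    exact hmem v (hS hv)
  · rwa [Finset.card_image_of_injective _ hinj]
  · rw [Finset.coe_image]
    exact hcoh.image_insertNth i fun v hv => hay v (hS hv)
  · rw [Finset.card_image_of_injective _ hinj]
end

section
/- For i ≥ 2, define por_i : 𝔹^i → 𝔹 by: por_i(x) = tt if at least i−1 coordinates of x equal tt; por_i(x) = ff if all i coordinates of x equal ff; and por_i(x) = ⊥ otherwise. Then por_i is monotone, cc(por_i) = 2, and bcc(por_i) = i + 1 (i.e. por_i has presequentiality level (i,1)). -/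
/-- The function `por i`: `tt` if at least `i - 1` coordinates are `tt`, `ff` if all
coordinates are `ff`, `⊥` otherwise. -/
def por (i : ℕ) : (Fin i → Bb) → Bb := fun x =>
  if i - 1 ≤ (Finset.univ.filter (fun c : Fin i => x c = ((true : Bool) : Bb))).card
  then ((true : Bool) : Bb)
  else if ∀ c, x c = ((false : Bool) : Bb) then ((false : Bool) : Bb)
  else ⊥

/-!
The trace of `por i` consists of the all-`ff` tuple and the `i` tuples that are `tt` everywhere
except for a single `⊥`: deleting any defined coordinate of these makes `por i` undefined, and
conversely a minimal point with value `tt` can have neither an `ff` entry nor more than `i - 1`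
entries `tt`. Tuples with values in `{⊥, tt}` are always coherent, so `cc (por i) = 2`. A coherent
set that contains the all-`ff` tuple and one of the others must contain all of them: if the one
with `⊥` at `j` were missing, coordinate `j` would be defined throughout, yet `tt` and `ff` meet
there. Hence `bcc (por i) = i + 1`, attained by the whole trace.
-/

open Finset Function

theorem Bb.eq_bot_or_eq_true_or_eq_false (a : Bb) :
    a = ⊥ ∨ a = (true : Bb) ∨ a = (false : Bb) := by
  induction a using WithBot.recBotCoe with
  | bot => exact Or.inl rfl
  | coe b => cases b <;> simp

theorem eq_bot_of_bLE_bot {a : Bb} (h : bLE a ⊥) : a = ⊥ :=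
  h.elim id id

section FlatOrder

variable {k : ℕ}

theorem tupLE.eq_of_forall_ne_bot {x y : Fin k → Bb} (h : tupLE x y) (hx : ∀ c, x c ≠ ⊥) :
    x = y :=
  funext fun c => (h c).resolve_left (hx c)

theorem tupLT_update_bot {v : Fin k → Bb} {c : Fin k} (hc : v c ≠ ⊥) :
    tupLT (update v c ⊥) v := by
  refine ⟨fun d => ?_, fun h => hc ((congrFun h c).symm.trans (update_self c ⊥ v))⟩
  rcases eq_or_ne d c with rfl | hd
  · exact Or.inl (update_self d ⊥ v)
  · exact Or.inr (update_of_ne hd ⊥ v)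

theorem tupLT.exists_tupLE_update_bot {v' v : Fin k → Bb} (h : tupLT v' v) :
    ∃ c, v c ≠ ⊥ ∧ tupLE v' (update v c ⊥) := by
  obtain ⟨c, hc⟩ := Function.ne_iff.mp h.2
  have hv'c : v' c = ⊥ := (h.1 c).resolve_right hc
  refine ⟨c, fun hvc => hc (hv'c.trans hvc.symm), fun d => ?_⟩
  rcases eq_or_ne d c with rfl | hd
  · exact Or.inl hv'c
  · rw [update_of_ne hd]
    exact h.1 d

theorem mem_traceDom_iff_of_flatMono {f : (Fin k → Bb) → Bb} (hf : FlatMono f)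
    {v : Fin k → Bb} :
    v ∈ traceDom f ↔ f v ≠ ⊥ ∧ ∀ c, v c ≠ ⊥ → f (update v c ⊥) = ⊥ := by
  refine and_congr_right fun _ => ⟨fun h c hc => h _ (tupLT_update_bot hc), fun h v' hv' => ?_⟩
  obtain ⟨c, hc, hle⟩ := hv'.exists_tupLE_update_bot
  exact eq_bot_of_bLE_bot (h c hc ▸ hf _ _ hle)

theorem linCoherent_of_forall_exists_eq_bot {S : Set (Fin k → Bb)}
    (h : ∀ j, ∃ v ∈ S, v j = ⊥) : LinCoherent S := fun j hj => by
  obtain ⟨v, hv, hvj⟩ := h j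
  exact absurd hvj (hj v hv)

theorem linCoherent_of_forall_eq_bot_or_eq {S : Set (Fin k → Bb)} (b : Bb)
    (h : ∀ v ∈ S, ∀ j, v j = ⊥ ∨ v j = b) : LinCoherent S :=
  fun j hj v hv w hw =>
    ((h v hv j).resolve_left (hj v hv)).trans ((h w hw j).resolve_left (hj w hw)).symm

theorem cc_eq_two_of_mem_traceDom {f : (Fin k → Bb) → Bb} {v w : Fin k → Bb}
    (hv : v ∈ traceDom f) (hw : w ∈ traceDom f) (hvw : v ≠ w)
    (hcoh : LinCoherent ({v, w} : Set (Fin k → Bb))) : cc f = 2 := by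
  have hcard : #({v, w} : Finset (Fin k → Bb)) = 2 := card_pair hvw
  refine IsLeast.csInf_eq ⟨⟨{v, w}, ?_, hcard.ge, by simpa using hcoh, by simp [hcard]⟩, ?_⟩
  · simp [Set.insert_subset_iff, hv, hw]
  · rintro c ⟨S, -, hS, -, rfl⟩
    exact_mod_cast hS

end FlatOrder

section Por

variable {i : ℕ}

def ttSet {k : ℕ} (x : Fin k → Bb) : Finset (Fin k) :=
  univ.filter (x · = (true : Bb))

theorem por_eq_ite (x : Fin i → Bb) :
    por i x = if i - 1 ≤ #(ttSet x) then (true : Bb)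
      else if ∀ c, x c = (false : Bb) then (false : Bb) else ⊥ :=
  rfl

theorem ttSet_mono {k : ℕ} {x y : Fin k → Bb} (h : tupLE x y) : ttSet x ⊆ ttSet y := by
  intro c hc
  simp only [ttSet, mem_filter, mem_univ, true_and] at hc ⊢
  exact ((h c).resolve_left (by simp [hc])).symm.trans hc

theorem ttSet_update_bot {k : ℕ} (x : Fin k → Bb) (c : Fin k) :
    ttSet (update x c ⊥) = (ttSet x).erase c := by
  ext d
  rcases eq_or_ne d c with rfl | hd <;> simp [ttSet, *]

theorem por_eq_true_iff {x : Fin i → Bb} : por i x = (true : Bb) ↔ i - 1 ≤ #(ttSet x) := by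
  rw [por_eq_ite]
  split_ifs <;> simp_all

theorem por_eq_false_iff (hi : 2 ≤ i) {x : Fin i → Bb} :
    por i x = (false : Bb) ↔ ∀ c, x c = (false : Bb) := by
  refine ⟨fun h => ?_, fun h => ?_⟩
  · rw [por_eq_ite] at h
    split_ifs at h <;> simp_all
  · have hnone : ttSet x = ∅ := by simp [ttSet, h]
    rw [por_eq_ite, if_neg (by simp [hnone]; omega), if_pos h]

theorem por_eq_bot_iff {x : Fin i → Bb} :
    por i x = ⊥ ↔ #(ttSet x) < i - 1 ∧ ∃ c, x c ≠ (false : Bb) := by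
  rw [por_eq_ite]
  split_ifs <;> simp_all
  omega

theorem por_flatMono (i : ℕ) : FlatMono (por i) := by
  intro x y hxy
  by_cases htt : i - 1 ≤ #(ttSet x)
  · have htt' := htt.trans (card_le_card (ttSet_mono hxy))
    exact Or.inr ((por_eq_true_iff.2 htt).trans (por_eq_true_iff.2 htt').symm)
  by_cases hff : ∀ c, x c = (false : Bb)
  · exact Or.inr (congrArg _ (hxy.eq_of_forall_ne_bot fun c => by simp [hff c]))
  · exact Or.inl (by rw [por_eq_ite, if_neg htt, if_neg hff])

variable (i) in
def ttExcept (j : Fin i) : Fin i → Bb :=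
  update (fun _ => (true : Bb)) j ⊥

variable (i) in
def allFalse : Fin i → Bb :=
  fun _ => (false : Bb)

@[simp]
theorem ttExcept_self (j : Fin i) : ttExcept i j j = ⊥ :=
  update_self j ⊥ _

@[simp]
theorem ttExcept_of_ne {j c : Fin i} (h : c ≠ j) : ttExcept i j c = (true : Bb) :=
  update_of_ne h ⊥ _

theorem ttExcept_eq_bot_or_eq_true (j c : Fin i) :
    ttExcept i j c = ⊥ ∨ ttExcept i j c = (true : Bb) := by
  rcases eq_or_ne c j with rfl | h
  · exact Or.inl (ttExcept_self c)
  · exact Or.inr (ttExcept_of_ne h)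

theorem ttExcept_injective : Injective (ttExcept i) := fun j l h => by
  by_contra hjl
  simpa [hjl] using congrFun h j

theorem allFalse_ne_ttExcept (j : Fin i) : allFalse i ≠ ttExcept i j := fun h => by
  simpa [allFalse] using congrFun h j

theorem por_allFalse (hi : 2 ≤ i) : por i (allFalse i) = (false : Bb) :=
  (por_eq_false_iff hi).2 fun _ => rfl

theorem ttSet_ttExcept (j : Fin i) : ttSet (ttExcept i j) = univ.erase j := by
  rw [ttExcept, ttSet_update_bot]
  congr
  ext
  simp [ttSet]

theorem ttExcept_mem_traceDom (hi : 2 ≤ i) (j : Fin i) : ttExcept i j ∈ traceDom (por i) := by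
  rw [mem_traceDom_iff_of_flatMono (por_flatMono i)]
  refine ⟨by simp [por_eq_true_iff.2, ttSet_ttExcept], fun c hc => ?_⟩
  have hcj : c ≠ j := by rintro rfl; exact hc (ttExcept_self c)
  refine por_eq_bot_iff.2 ⟨?_, c, by simp⟩
  rw [ttSet_update_bot, ttSet_ttExcept, card_erase_of_mem (by simp [hcj])]
  simp
  omega

theorem allFalse_mem_traceDom (hi : 2 ≤ i) : allFalse i ∈ traceDom (por i) := by
  rw [mem_traceDom_iff_of_flatMono (por_flatMono i)]
  have hempty : ttSet (allFalse i) = ∅ := by simp [ttSet, allFalse]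
  refine ⟨by simp [por_allFalse hi], fun c _ => ?_⟩
  refine por_eq_bot_iff.2 ⟨?_, c, by simp⟩
  rw [ttSet_update_bot, hempty, erase_empty, card_empty]
  omega

theorem exists_eq_ttExcept_of_mem_traceDom (hi : 2 ≤ i) {v : Fin i → Bb}
    (hv : v ∈ traceDom (por i)) (htt : por i v = (true : Bb)) : ∃ j, v = ttExcept i j := by
  have hmin := ((mem_traceDom_iff_of_flatMono (por_flatMono i)).1 hv).2
  rw [por_eq_true_iff] at htt
  have hno_false : ∀ c, v c ≠ (false : Bb) := fun c hc => by
    have := (por_eq_bot_iff.1 (hmin c (by simp [hc]))).1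
    rw [ttSet_update_bot, erase_eq_of_notMem (by simp [ttSet, hc])] at this
    omega
  have hcard : #(ttSet v) = i - 1 := by
    obtain ⟨c, hc⟩ := card_pos.1 (show 0 < #(ttSet v) by omega)
    have := (por_eq_bot_iff.1 (hmin c (by simp_all [ttSet]))).1
    rw [ttSet_update_bot, card_erase_of_mem hc] at this
    omega
  obtain ⟨j, hj⟩ := card_eq_one.1 (show #(ttSet v)ᶜ = 1 by
    rw [card_compl, hcard, Fintype.card_fin]
    omega)
  refine ⟨j, funext fun c => ?_⟩
  have hmem : c ∈ ttSet v ↔ c ≠ j := by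
    rw [← not_iff_not, ← mem_compl, hj, mem_singleton, not_not]
  rcases eq_or_ne c j with rfl | hcj
  · have hnt : v c ≠ (true : Bb) := by simpa [ttSet] using hmem
    rw [ttExcept_self]
    exact ((v c).eq_bot_or_eq_true_or_eq_false.resolve_right (not_or.2 ⟨hnt, hno_false c⟩))
  · simpa [ttSet, hcj] using hmem.2 hcj

variable (i) in
def porTrace : Finset (Fin i → Bb) :=
  insert (allFalse i) (univ.image (ttExcept i))

theorem mem_porTrace {v : Fin i → Bb} :
    v ∈ porTrace i ↔ v = allFalse i ∨ ∃ j, ttExcept i j = v := by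
  simp [porTrace]

theorem coe_porTrace (hi : 2 ≤ i) : (porTrace i : Set (Fin i → Bb)) = traceDom (por i) := by
  ext v
  rw [mem_coe, mem_porTrace]
  constructor
  · rintro (rfl | ⟨j, rfl⟩)
    exacts [allFalse_mem_traceDom hi, ttExcept_mem_traceDom hi j]
  · intro hv
    rcases (por i v).eq_bot_or_eq_true_or_eq_false with h | h | h
    · exact absurd h hv.1
    · obtain ⟨j, rfl⟩ := exists_eq_ttExcept_of_mem_traceDom hi hv h
      exact Or.inr ⟨j, rfl⟩
    · exact Or.inl (funext ((por_eq_false_iff hi).1 h))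

theorem card_porTrace : #(porTrace i) = i + 1 := by
  rw [porTrace, card_insert_of_notMem (by simpa using fun j => (allFalse_ne_ttExcept j).symm),
    card_image_of_injective _ ttExcept_injective, card_univ, Fintype.card_fin]

theorem porTrace_subset_of_linCoherent (hi : 2 ≤ i) {S : Finset (Fin i → Bb)}
    (hS : ↑S ⊆ traceDom (por i)) (hcoh : LinCoherent (S : Set (Fin i → Bb)))
    (htt : ∃ v ∈ S, por i v = (true : Bb)) (hff : ∃ v ∈ S, por i v = (false : Bb)) :
    porTrace i ⊆ S := by
  obtain ⟨_, hfS, hf⟩ := hff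
  obtain rfl : _ = allFalse i := funext ((por_eq_false_iff hi).1 hf)
  obtain ⟨_, htS, ht⟩ := htt
  obtain ⟨k, rfl⟩ := exists_eq_ttExcept_of_mem_traceDom hi (hS htS) ht
  refine insert_subset hfS (image_subset_iff.2 fun j _ => ?_)
  by_contra hjS
  have hkj : k ≠ j := by rintro rfl; exact hjS htS
  have hdef : ∀ w ∈ (S : Set (Fin i → Bb)), w j ≠ ⊥ := by
    intro w hw
    have hw' : w ∈ porTrace i := by rw [← mem_coe, coe_porTrace hi]; exact hS hw
    rcases mem_porTrace.1 hw' with rfl | ⟨l, rfl⟩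
    · simp [allFalse]
    · have hlj : j ≠ l := by rintro rfl; exact hjS hw
      simp [hlj]
  simpa [hkj.symm, allFalse] using hcoh j hdef _ htS _ hfS

theorem cc_por (hi : 2 ≤ i) : cc (por i) = 2 := by
  have h01 : (⟨0, by omega⟩ : Fin i) ≠ ⟨1, by omega⟩ := by simp
  refine cc_eq_two_of_mem_traceDom (ttExcept_mem_traceDom hi _) (ttExcept_mem_traceDom hi _)
    (ttExcept_injective.ne h01) (linCoherent_of_forall_eq_bot_or_eq (true : Bb) ?_)
  rintro v (rfl | rfl) c <;> exact ttExcept_eq_bot_or_eq_true _ c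

theorem bcc_por (hi : 2 ≤ i) : bcc (por i) = (i + 1 : ℕ) := by
  have h0 : ttExcept i ⟨0, by omega⟩ ∈ porTrace i := by simp [porTrace]
  refine IsLeast.csInf_eq ⟨⟨porTrace i, (coe_porTrace hi).le, by rw [card_porTrace]; omega,
      linCoherent_of_forall_exists_eq_bot fun j => ⟨ttExcept i j, by simp [porTrace]⟩,
      ⟨_, h0, por_eq_true_iff.2 (by simp [ttSet_ttExcept])⟩,
      ⟨allFalse i, by simp [porTrace], por_allFalse hi⟩,
      by rw [card_porTrace]⟩, ?_⟩
  rintro c ⟨S, hS, -, hcoh, htt, hff, rfl⟩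
  have := card_le_card (porTrace_subset_of_linCoherent hi hS hcoh htt hff)
  rw [card_porTrace] at this
  exact_mod_cast this

end Por

/-- for `i ≥ 2`, `por i` is monotone, `cc (por i) = 2` and
`bcc (por i) = i + 1`. -/
theorem stmt_16 (i : ℕ) (hi : 2 ≤ i) :
    FlatMono (por i) ∧ cc (por i) = ((2 : ℕ) : ℕ∞) ∧
    bcc (por i) = ((i + 1 : ℕ) : ℕ∞) :=
  ⟨por_flatMono i, cc_por hi, bcc_por hi⟩
end
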